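/- Let Φ be a root system in E, let T ⊆ Φ be a special closed subset, and set S = {α ∈ Φ : α ∉ T, −α ∉ T, and T ∪ {α, −α} is closed}. Then S is a closed subset of Φ (and is symmetric, i.e., α ∈ S implies −α ∈ S). -/

import Mathlib

open scoped RealInnerProductSpace

/-- The reflection determined by a root `α`: `s_α(x) = x - (2(x,α)/(α,α)) α`. -/
noncomputable def reflectRoot {E : Type*} [NormedAddCommGroup E] [InnerProductSpace ℝ E] (α x : E) : E :=
  x - (2 * ⟪x, α⟫ / ⟪α, α⟫) • α

/-- A root system in a finite-dimensional real inner product space. -/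
def IsRootSystem {E : Type*} [NormedAddCommGroup E] [InnerProductSpace ℝ E] (Φ : Set E) : Prop :=
  Φ.Finite ∧ Submodule.span ℝ Φ = ⊤ ∧ (0 : E) ∉ Φ ∧
    (∀ α ∈ Φ, ∀ t : ℝ, t • α ∈ Φ → t • α = α ∨ t • α = -α) ∧
    (∀ α ∈ Φ, ∀ β ∈ Φ, reflectRoot α β ∈ Φ) ∧
    (∀ α ∈ Φ, ∀ β ∈ Φ, ∃ n : ℤ, 2 * ⟪β, α⟫ / ⟪α, α⟫ = (n : ℝ))

/-- `T` is a closed subset of the root system `Φ`. -/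
def IsClosedSub {E : Type*} [AddCommGroup E] (Φ T : Set E) : Prop :=
  T ⊆ Φ ∧ ∀ α ∈ T, ∀ β ∈ T, α + β ∈ Φ → α + β ∈ T

/-- The symmetric part `T^r = {α ∈ T | -α ∈ T}`. -/
def symmPart {E : Type*} [AddCommGroup E] (T : Set E) : Set E := {α ∈ T | -α ∈ T}

/-- The special part `T^u = {α ∈ T | -α ∉ T}`. -/
def specPart {E : Type*} [AddCommGroup E] (T : Set E) : Set E := {α ∈ T | -α ∉ T}

/-- `T + T`: elements of `T` that are sums of two elements of `T`. -/
def sumSet {E : Type*} [AddCommGroup E] (T : Set E) : Set E :=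
  {γ ∈ T | ∃ α ∈ T, ∃ β ∈ T, γ = α + β}

/-- The Weyl group of `Φ`: the subgroup of linear automorphisms of `E` generated by the
reflections in the roots. -/
def weylGroup {E : Type*} [NormedAddCommGroup E] [InnerProductSpace ℝ E] (Φ : Set E) :
    Subgroup (E ≃ₗ[ℝ] E) :=
  Subgroup.closure {w | ∃ α ∈ Φ, ∀ x, w x = reflectRoot α x}

/-- `Φp` is a set of positive roots of `Φ`. -/
def IsPositiveSystem {E : Type*} [NormedAddCommGroup E] [InnerProductSpace ℝ E]
    (Φ Φp : Set E) : Prop :=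
  ∃ f : E →ₗ[ℝ] ℝ, (∀ α ∈ Φ, f α ≠ 0) ∧ Φp = {α ∈ Φ | 0 < f α}

/-!
Let `α, β ∈ S` with `γ = α + β ∈ Φ`. Closedness of `T ∪ {γ, -γ}` amounts to `T` being stable
under adding `±γ` (as long as the sums are roots). For `x ∈ T` with `x + α + β ∈ Φ`, an
inner-product computation in the root system shows that `x + α` or `x + β` is a root, so `x + γ`
is reached from `x` by adding `α` and `β` one at a time, each step staying in `T` because
`T ∪ {±α}` and `T ∪ {±β}` are closed. Likewise `γ ∈ T` or `-γ ∈ T` would put `β = γ - α`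
or `-β = -γ + α` into `T`.
-/

namespace IsRootSystem

variable {E : Type*} [NormedAddCommGroup E] [InnerProductSpace ℝ E] {Φ : Set E}

lemma zero_notMem (hΦ : IsRootSystem Φ) : (0 : E) ∉ Φ := hΦ.2.2.1

lemma reflectRoot_mem (hΦ : IsRootSystem Φ) {α β : E} (hα : α ∈ Φ) (hβ : β ∈ Φ) :
    reflectRoot α β ∈ Φ :=
  hΦ.2.2.2.2.1 α hα β hβ

lemma ne_zero (hΦ : IsRootSystem Φ) {α : E} (hα : α ∈ Φ) : α ≠ 0 :=
  fun h => hΦ.zero_notMem (h ▸ hα)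

lemma inner_self_pos (hΦ : IsRootSystem Φ) {α : E} (hα : α ∈ Φ) : 0 < ⟪α, α⟫ :=
  real_inner_self_pos.mpr (hΦ.ne_zero hα)

lemma neg_mem (hΦ : IsRootSystem Φ) {α : E} (hα : α ∈ Φ) : -α ∈ Φ := by
  have hαα := (hΦ.inner_self_pos hα).ne'
  have h : reflectRoot α α = -α := by
    rw [reflectRoot, mul_div_assoc, div_self hαα, mul_one, two_smul]
    abel
  exact h ▸ hΦ.reflectRoot_mem hα hα

lemma add_self_notMem (hΦ : IsRootSystem Φ) {α : E} (hα : α ∈ Φ) : α + α ∉ Φ := by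
  intro h
  rcases hΦ.2.2.2.1 α hα 2 (by rwa [two_smul]) with h2 | h2
  · exact hΦ.ne_zero hα (by simpa [two_smul] using h2)
  · have h3 : (3 : ℝ) • α = 0 := by
      rw [show (3 : ℝ) = 2 + 1 by norm_num, add_smul, h2, one_smul, neg_add_cancel]
    exact hΦ.ne_zero hα ((smul_eq_zero.mp h3).resolve_left (by norm_num))

/-- The Cartan integer `2⟪μ, ν⟫ / ⟪ν, ν⟫` is positive and not `1`, hence at least `2`. -/
lemma inner_self_le_inner (hΦ : IsRootSystem Φ) {μ ν : E} (hμ : μ ∈ Φ) (hν : ν ∈ Φ)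
    (h : 0 < ⟪μ, ν⟫) (h1 : 2 * ⟪μ, ν⟫ / ⟪ν, ν⟫ ≠ 1) : ⟪ν, ν⟫ ≤ ⟪μ, ν⟫ := by
  have hνν := hΦ.inner_self_pos hν
  obtain ⟨n, hn⟩ := hΦ.2.2.2.2.2 ν hν μ hμ
  have hn0 : (0 : ℝ) < n := hn ▸ by positivity
  have hn2 : (2 : ℝ) ≤ n := by
    have : n ≠ 1 := by rintro rfl; exact h1 (by rw [hn]; norm_num)
    have : (0 : ℤ) < n := by exact_mod_cast hn0
    exact_mod_cast (show (2 : ℤ) ≤ n by omega)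
  rw [← hn, le_div_iff₀ hνν] at hn2
  linarith

lemma sub_mem_of_inner_pos (hΦ : IsRootSystem Φ) {μ ν : E} (hμ : μ ∈ Φ) (hν : ν ∈ Φ)
    (h : 0 < ⟪μ, ν⟫) : μ = ν ∨ μ - ν ∈ Φ := by
  by_cases hn : 2 * ⟪μ, ν⟫ / ⟪ν, ν⟫ = 1
  · right
    have h' := hΦ.reflectRoot_mem hν hμ
    rwa [reflectRoot, hn, one_smul] at h'
  by_cases hm : 2 * ⟪ν, μ⟫ / ⟪μ, μ⟫ = 1
  · right
    have h' := hΦ.neg_mem (hΦ.reflectRoot_mem hμ hν)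
    rwa [reflectRoot, hm, one_smul, neg_sub] at h'
  left
  have hνν := hΦ.inner_self_le_inner hμ hν h hn
  have hμμ := hΦ.inner_self_le_inner hν hμ (real_inner_comm μ ν ▸ h) hm
  rw [real_inner_comm μ ν] at hμμ
  rw [← sub_eq_zero, ← real_inner_self_nonpos, real_inner_sub_sub_self]
  linarith

lemma add_mem_of_inner_neg (hΦ : IsRootSystem Φ) {μ ν : E} (hμ : μ ∈ Φ) (hν : ν ∈ Φ)
    (h : ⟪μ, ν⟫ < 0) : μ + ν = 0 ∨ μ + ν ∈ Φ := by
  have h' : 0 < ⟪μ, -ν⟫ := by rw [inner_neg_right]; linarith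
  simpa [sub_eq_zero, eq_neg_iff_add_eq_zero] using hΦ.sub_mem_of_inner_pos hμ (hΦ.neg_mem hν) h'

lemma inner_nonneg_of_add_notMem (hΦ : IsRootSystem Φ) {μ ν : E} (hμ : μ ∈ Φ) (hν : ν ∈ Φ)
    (h0 : μ + ν ≠ 0) (h : μ + ν ∉ Φ) : 0 ≤ ⟪μ, ν⟫ := by
  by_contra! hneg
  exact (hΦ.add_mem_of_inner_neg hμ hν hneg).elim h0 h

lemma inner_nonpos_of_sub_notMem (hΦ : IsRootSystem Φ) {μ ν : E} (hμ : μ ∈ Φ) (hν : ν ∈ Φ)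
    (h0 : μ ≠ ν) (h : μ - ν ∉ Φ) : ⟪μ, ν⟫ ≤ 0 := by
  by_contra! hpos
  exact (hΦ.sub_mem_of_inner_pos hμ hν hpos).elim h0 h

/-- Otherwise `⟪a, b⟫, ⟪a, c⟫ ≥ 0` and `⟪a + b + c, b⟫, ⟪a + b + c, c⟫ ≤ 0`, which force
`‖b + c‖² = ‖(a + b + c) - a‖² ≤ 0`. -/
lemma add_mem_or_add_mem (hΦ : IsRootSystem Φ) {a b c : E} (ha : a ∈ Φ) (hb : b ∈ Φ)
    (hc : c ∈ Φ) (habc : a + b + c ∈ Φ) (hbc : b + c ≠ 0) (hab : a + b ≠ 0) (hac : a + c ≠ 0) :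
    a + b ∈ Φ ∨ a + c ∈ Φ := by
  by_contra! h
  obtain ⟨hab', hac'⟩ := h
  have hδb : ⟪a + b + c, b⟫ ≤ 0 :=
    hΦ.inner_nonpos_of_sub_notMem habc hb
      (fun h => hac (add_eq_right.mp (by rwa [add_right_comm] at h)))
      (by rwa [add_sub_right_comm, add_sub_cancel_right])
  have hδc : ⟪a + b + c, c⟫ ≤ 0 :=
    hΦ.inner_nonpos_of_sub_notMem habc hc (fun h => hab (add_eq_right.mp h))
      (by rwa [add_sub_cancel_right])
  have hb' := hΦ.inner_nonneg_of_add_notMem ha hb hab hab'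
  have hc' := hΦ.inner_nonneg_of_add_notMem ha hc hac hac'
  apply hbc
  rw [← real_inner_self_nonpos, show b + c = a + b + c - a by abel, real_inner_sub_sub_self]
  simp only [inner_add_left, inner_add_right, real_inner_comm a] at hδb hδc ⊢
  nlinarith [real_inner_comm b c]

end IsRootSystem

def AddStable {E : Type*} [Add E] (Φ T : Set E) (α : E) : Prop :=
  ∀ x ∈ T, x + α ∈ Φ → x + α ∈ T

def IsAdjoinable {E : Type*} [AddCommGroup E] (Φ T : Set E) (α : E) : Prop :=
  α ∈ Φ ∧ α ∉ T ∧ -α ∉ T ∧ IsClosedSub Φ (T ∪ {α, -α})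

lemma union_pair_neg {E : Type*} [InvolutiveNeg E] (T : Set E) (α : E) :
    T ∪ {-α, -(-α)} = T ∪ {α, -α} := by
  rw [neg_neg, Set.pair_comm]

section ClosedSubsets

variable {E : Type*} [NormedAddCommGroup E] [InnerProductSpace ℝ E] {Φ T : Set E}

lemma IsClosedSub.addStable_of_union_pair (hΦ : IsRootSystem Φ) {α : E}
    (hc : IsClosedSub Φ (T ∪ {α, -α})) : AddStable Φ T α := by
  intro x hx hxα
  have hxΦ : x ∈ Φ := hc.1 (Or.inl hx)
  have hαΦ : α ∈ Φ := hc.1 (Or.inr (Or.inl rfl))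
  rcases hc.2 x (Or.inl hx) α (Or.inr (Or.inl rfl)) hxα with h | h | h
  · exact h
  · exact absurd (add_eq_right.mp h ▸ hxΦ) hΦ.zero_notMem
  · have hx' : -x = α + α := by rw [eq_sub_of_add_eq h.out]; abel
    exact absurd (hx' ▸ hΦ.neg_mem hxΦ) (hΦ.add_self_notMem hαΦ)

lemma isClosedSub_union_pair_iff (hΦ : IsRootSystem Φ) (hT : IsClosedSub Φ T) {γ : E}
    (hγ : γ ∈ Φ) :
    IsClosedSub Φ (T ∪ {γ, -γ}) ↔ AddStable Φ T γ ∧ AddStable Φ T (-γ) := by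
  refine ⟨fun hc => ⟨hc.addStable_of_union_pair hΦ,
    (union_pair_neg T γ ▸ hc).addStable_of_union_pair hΦ⟩, fun ⟨hs, hs'⟩ => ⟨?_, ?_⟩⟩
  · rintro x (hx | rfl | rfl)
    exacts [hT.1 hx, hγ, hΦ.neg_mem hγ]
  · rintro x (hx | rfl | rfl) y (hy | rfl | rfl) hxy
    · exact Or.inl (hT.2 x hx y hy hxy)
    · exact Or.inl (hs x hx hxy)
    · exact Or.inl (hs' x hx hxy)
    · rw [add_comm] at hxy ⊢; exact Or.inl (hs y hy hxy)
    · exact absurd hxy (hΦ.add_self_notMem hγ)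
    · exact absurd (add_neg_cancel x ▸ hxy) hΦ.zero_notMem
    · rw [add_comm] at hxy ⊢; exact Or.inl (hs' y hy hxy)
    · exact absurd (neg_add_cancel y ▸ hxy) hΦ.zero_notMem
    · exact absurd hxy (hΦ.add_self_notMem (hΦ.neg_mem hγ))

/-- Of `x + α` and `x + β` one is a root, so `x + α + β` is reached through `T` in two steps. -/
lemma AddStable.add (hΦ : IsRootSystem Φ) (hT : T ⊆ Φ) {α β : E} (hα : α ∈ Φ) (hβ : β ∈ Φ)
    (hsα : AddStable Φ T α) (hsβ : AddStable Φ T β) (hα' : -α ∉ T) (hβ' : -β ∉ T)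
    (hαβ : α + β ∈ Φ) : AddStable Φ T (α + β) := by
  intro x hx hsum
  have hδ : x + α + β ∈ Φ := by rwa [add_assoc]
  rcases hΦ.add_mem_or_add_mem (hT hx) hα hβ hδ (hΦ.ne_zero hαβ)
      (fun h => hα' (by rwa [neg_eq_of_add_eq_zero_left h]))
      (fun h => hβ' (by rwa [neg_eq_of_add_eq_zero_left h])) with h | h
  · rw [← add_assoc]
    exact hsβ _ (hsα x hx h) hδ
  · rw [add_comm α, ← add_assoc]
    exact hsα _ (hsβ x hx h) (by rwa [add_right_comm])

lemma IsAdjoinable.neg {α : E} (hΦ : IsRootSystem Φ) (h : IsAdjoinable Φ T α) :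
    IsAdjoinable Φ T (-α) := by
  obtain ⟨hα, hαT, hαT', hc⟩ := h
  exact ⟨hΦ.neg_mem hα, hαT', by rwa [neg_neg], by rwa [union_pair_neg]⟩

lemma IsAdjoinable.add (hΦ : IsRootSystem Φ) (hT : IsClosedSub Φ T) {α β : E}
    (hα : IsAdjoinable Φ T α) (hβ : IsAdjoinable Φ T β) (hαβ : α + β ∈ Φ) :
    IsAdjoinable Φ T (α + β) := by
  obtain ⟨hαΦ, hαT, hαT', hcα⟩ := hα
  obtain ⟨hβΦ, hβT, hβT', hcβ⟩ := hβ
  obtain ⟨hsα, hsα'⟩ := (isClosedSub_union_pair_iff hΦ hT hαΦ).1 hcα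
  obtain ⟨hsβ, hsβ'⟩ := (isClosedSub_union_pair_iff hΦ hT hβΦ).1 hcβ
  refine ⟨hαβ, fun h => hβT ?_, fun h => hβT' ?_, (isClosedSub_union_pair_iff hΦ hT hαβ).2
    ⟨hsα.add hΦ hT.1 hαΦ hβΦ hsβ hαT' hβT' hαβ, ?_⟩⟩
  · simpa using hsα' _ h (by simpa using hβΦ)
  · simpa using hsα _ h (by simpa using hΦ.neg_mem hβΦ)
  · rw [neg_add]
    exact hsα'.add hΦ hT.1 (hΦ.neg_mem hαΦ) (hΦ.neg_mem hβΦ) hsβ' (by rwa [neg_neg])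
      (by rwa [neg_neg]) (by rw [← neg_add]; exact hΦ.neg_mem hαβ)

end ClosedSubsets

theorem symmetric_complement_closed_general {E : Type*} [NormedAddCommGroup E]
    [InnerProductSpace ℝ E] (Φ T S : Set E)
    (hΦ : IsRootSystem Φ) (hT : IsClosedSub Φ T)
    (hS : S = {α ∈ Φ | α ∉ T ∧ -α ∉ T ∧ IsClosedSub Φ (T ∪ {α, -α})}) :
    IsClosedSub Φ S ∧ ∀ α ∈ S, -α ∈ S := by
  subst hS
  exact ⟨⟨fun α hα => hα.1, fun α hα β hβ hαβ => IsAdjoinable.add hΦ hT hα hβ hαβ⟩,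
    fun α hα => IsAdjoinable.neg hΦ hα⟩

/-- The set `S` of roots `α ∉ ±T` with `T ∪ {α, -α}` closed is itself a
closed, symmetric subset of `Φ`. -/
theorem symmetric_complement_closed {E : Type*} [NormedAddCommGroup E]
    [InnerProductSpace ℝ E] [FiniteDimensional ℝ E] (Φ T S : Set E)
    (hΦ : IsRootSystem Φ) (hT : IsClosedSub Φ T) (hspec : ∀ α ∈ T, -α ∉ T)
    (hS : S = {α ∈ Φ | α ∉ T ∧ -α ∉ T ∧ IsClosedSub Φ (T ∪ {α, -α})}) :
    IsClosedSub Φ S ∧ ∀ α ∈ S, -α ∈ S :=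
  symmetric_complement_closed_general Φ T S hΦ hT hS
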